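/- arXiv:0902.2009 — 3 statements merged into one kernel-verified Lean document; each statement's English description precedes it below -/
import Mathlib

section
/- Let f : X → Y be a flat morphism of schemes with Y integral. If there exists a dense open subset U ⊆ Y such that f⁻¹(U) is integral, then X is integral. -/
/-!
Flatness turns the pullback of a nonzero section `a` of the integral scheme `Y` into a
nonzerodivisor `φ` of `Γ(X, V)` for every open `V ⊆ f⁻¹ W`, since it is one in every stalk.
Around any point of `X` choose affine opens `V ⊆ f⁻¹ W` and `a ∈ Γ(Y, W)` with `D(a) ⊆ U`.
Then `Γ(X, V)` embeds into its localization `Γ(X, D(φ))`, which is reduced because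
`D(φ) ⊆ f⁻¹ U`; and `D(φ)` is nonempty, so it meets every open around the point.
Hence `X` is reduced and `f⁻¹ U` is a dense irreducible subset of `X`.
-/

open AlgebraicGeometry CategoryTheory

/-- A morphism of schemes is flat if it is flat on all stalks. -/
def SchemeHomFlat {X Y : AlgebraicGeometry.Scheme} (f : X ⟶ Y) : Prop :=
  ∀ x : X, letI := ((f.stalkMap x).hom : _ →+* _).toAlgebra
    Module.Flat (Y.presheaf.stalk (f.base x)) (X.presheaf.stalk x)

open scoped nonZeroDivisors

theorem IsIrreducible.irreducibleSpace_of_dense {T : Type*} [TopologicalSpace T] {s : Set T}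
    (hs : IsIrreducible s) (hd : Dense s) : IrreducibleSpace T :=
  (irreducibleSpace_def T).mpr (hd.closure_eq ▸ hs.closure : IsIrreducible Set.univ)

namespace AlgebraicGeometry

theorem IsAffineOpen.res_basicOpen_injective {X : Scheme} {V : X.Opens}
    (hV : IsAffineOpen V) {φ : Γ(X, V)} (hφ : φ ∈ Γ(X, V)⁰) :
    Function.Injective (X.presheaf.map (homOfLE (X.basicOpen_le φ)).op) := by
  let := hV.isLocalization_basicOpen φ
  exact IsLocalization.injective _ (Submonoid.powers_le.mpr hφ)

theorem IsAffineOpen.basicOpen_nonempty {X : Scheme} {V : X.Opens}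
    (hV : IsAffineOpen V) (hne : (V : Set X).Nonempty) {φ : Γ(X, V)} (hφ : φ ∈ Γ(X, V)⁰) :
    (X.basicOpen φ : Set X).Nonempty := by
  have : Nonempty V := hne.to_subtype
  by_contra hbot
  obtain ⟨n, hn⟩ := (Scheme.isNilpotent_iff_basicOpen_eq_bot_of_isCompact hV.isCompact φ).mpr
    ((TopologicalSpace.Opens.not_nonempty_iff_eq_bot _).mp hbot)
  exact zero_notMem_nonZeroDivisors (hn ▸ pow_mem hφ n)

theorem isReduced_sections_of_le {X : Scheme} {U D : X.Opens} [IsReduced U] (h : D ≤ U) :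
    _root_.IsReduced Γ(X, D) := by
  have : IsReduced D := isReduced_of_isOpenImmersion (X.homOfLE h)
  exact isReduced_of_injective D.topIso.inv.hom D.topIso.commRingCatIsoToRingEquiv.symm.injective

end AlgebraicGeometry

namespace SchemeHomFlat

variable {X Y : Scheme} {f : X ⟶ Y}

theorem stalkMap_mem_nonZeroDivisors (hf : SchemeHomFlat f) (x : X)
    {a : Y.presheaf.stalk (f x)} (ha : a ∈ (Y.presheaf.stalk (f x))⁰) :
    f.stalkMap x a ∈ (X.presheaf.stalk x)⁰ := by
  let := (f.stalkMap x).hom.toAlgebra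
  have := hf x
  refine mem_nonZeroDivisors_iff_right.mpr fun b hb ↦
    Module.Flat.isSMulRegular_of_nonZeroDivisors ha ?_
  change a • b = a • 0
  rw [smul_zero, Algebra.smul_def, mul_comm]
  exact hb

theorem appLE_mem_nonZeroDivisors (hf : SchemeHomFlat f) [IsIntegral Y] {W : Y.Opens}
    {V : X.Opens} (e : V ≤ f ⁻¹ᵁ W) {a : Γ(Y, W)} (ha : a ≠ 0) :
    f.appLE W V e a ∈ Γ(X, V)⁰ := by
  refine mem_nonZeroDivisors_iff_right.mpr fun b hb ↦
    TopCat.Presheaf.section_ext X.sheaf V b 0 fun x hx ↦ ?_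
  change X.presheaf.germ V x hx b = X.presheaf.germ V x hx 0
  have hgerm : X.presheaf.germ V x hx (f.appLE W V e a) =
      f.stalkMap x (Y.presheaf.germ W (f x) (e hx) a) := by
    simp only [Scheme.Hom.appLE, CommRingCat.hom_comp, RingHom.coe_comp, Function.comp_apply,
      X.presheaf.germ_res_apply]
    exact (f.germ_stalkMap_apply W x (e hx) a).symm
  have ha' : Y.presheaf.germ W (f x) (e hx) a ∈ (Y.presheaf.stalk (f x))⁰ :=
    mem_nonZeroDivisors_of_ne_zero <| by
      simpa using (germ_injective_of_isIntegral Y (f x) (e hx)).ne ha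
  rw [map_zero, ← mul_right_mem_nonZeroDivisors_eq_zero_iff
    (hf.stalkMap_mem_nonZeroDivisors x ha'), ← hgerm, ← map_mul, hb, map_zero]

theorem exists_basicOpen_le_preimage (hf : SchemeHomFlat f) [IsIntegral Y] {U : Y.Opens}
    (hU : Dense (U : Set Y)) {V : X.Opens} {x : X} (hx : x ∈ V) :
    ∃ V' : X.Opens, IsAffineOpen V' ∧ x ∈ V' ∧ V' ≤ V ∧
      ∃ φ ∈ Γ(X, V')⁰, X.basicOpen φ ≤ f ⁻¹ᵁ U := by
  obtain ⟨_, ⟨W, hW, rfl⟩, hxW, -⟩ :=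
    Y.isBasis_affineOpens.exists_subset_of_mem_open (Set.mem_univ (f x)) isOpen_univ
  obtain ⟨_, ⟨V', hV', rfl⟩, hxV', hV'le⟩ :=
    X.isBasis_affineOpens.exists_subset_of_mem_open (a := x) (u := ↑(V ⊓ f ⁻¹ᵁ W))
      ⟨hx, hxW⟩ (V ⊓ f ⁻¹ᵁ W).isOpen
  obtain ⟨z, hzW, hzU⟩ := hU.inter_open_nonempty W W.isOpen ⟨f x, hxW⟩
  obtain ⟨a, haU, hza⟩ := hW.exists_basicOpen_le (V := U) ⟨z, hzU⟩ hzW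
  have ha : a ≠ 0 := by
    rintro rfl
    simp at hza
  have e : V' ≤ f ⁻¹ᵁ W := fun y hy ↦ (hV'le hy).2
  refine ⟨V', hV', hxV', fun y hy ↦ (hV'le hy).1, f.appLE W V' e a,
    hf.appLE_mem_nonZeroDivisors e ha, ?_⟩
  rw [Scheme.basicOpen_appLE]
  exact inf_le_right.trans (f.preimage_mono haU)

theorem dense_preimage (hf : SchemeHomFlat f) [IsIntegral Y] {U : Y.Opens}
    (hU : Dense (U : Set Y)) : Dense (f ⁻¹ᵁ U : Set X) := by
  refine dense_iff_inter_open.mpr fun V hV ⟨x, hx⟩ ↦ ?_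
  obtain ⟨V', hV', hxV', hV'V, φ, hφ, hφU⟩ :=
    hf.exists_basicOpen_le_preimage hU (V := ⟨V, hV⟩) hx
  obtain ⟨y, hy⟩ := hV'.basicOpen_nonempty ⟨x, hxV'⟩ hφ
  exact ⟨y, hV'V (X.basicOpen_le φ hy), hφU hy⟩

theorem isReduced (hf : SchemeHomFlat f) [IsIntegral Y] {U : Y.Opens}
    (hU : Dense (U : Set Y)) [IsReduced (f ⁻¹ᵁ U)] : IsReduced X := by
  have (x : X) : _root_.IsReduced (X.presheaf.stalk x) := by
    obtain ⟨V, hV, hxV, -, φ, hφ, hφU⟩ := hf.exists_basicOpen_le_preimage hU (V := ⊤) trivial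
    have : _root_.IsReduced Γ(X, X.basicOpen φ) := isReduced_sections_of_le hφU
    have : _root_.IsReduced Γ(X, V) := isReduced_of_injective _ (hV.res_basicOpen_injective hφ)
    let := TopCat.Presheaf.algebra_section_stalk X.presheaf ⟨x, hxV⟩
    have := hV.isLocalization_stalk ⟨x, hxV⟩
    exact isReduced_localizationPreserves (hV.primeIdealOf ⟨x, hxV⟩).asIdeal.primeCompl _ ‹_›
  exact isReduced_of_isReduced_stalk X

end SchemeHomFlat

/-- Let `f : X ⟶ Y` be a flat morphism of schemes with `Y` integral.
If there is a dense open `U ⊆ Y` whose preimage `f ⁻¹ᵁ U` is integral, then `X` is integral. -/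
theorem flat_pullback_integral
    {X Y : AlgebraicGeometry.Scheme} (f : X ⟶ Y)
    (hf : SchemeHomFlat f) [IsIntegral Y]
    (U : Y.Opens) (hU : Dense (U : Set Y))
    (hpre : IsIntegral ((f ⁻¹ᵁ U).toScheme)) :
    IsIntegral X := by
  have : IsReduced X := hf.isReduced hU
  have : IrreducibleSpace (f ⁻¹ᵁ U).toScheme := inferInstance
  have : IrreducibleSpace X :=
    (isIrreducible_iff_irreducibleSpace.mpr this).irreducibleSpace_of_dense (hf.dense_preimage hU)
  exact isIntegral_of_irreducibleSpace_of_isReduced X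
end

section
/- Let A be an integral domain and B a flat A-algebra. If there exists a nonzero a ∈ A such that the localization B_a is an integral domain, then B is an integral domain. -/
/-!
Since `a ≠ 0` is regular in the domain `A` and `B` is flat over `A`, its image in `B` is again
regular (tensoring the injection `A → A` given by multiplication with `a` with `B`). Hence `B`
embeds into its localization `B_a`, and a subring of a domain is a domain.
-/

theorem IsRegular.algebraMap_of_flat {R S : Type*} [CommSemiring R] [CommSemiring S]
    [Algebra R S] [Module.Flat R S] {r : R} (hr : IsRegular r) :
    IsRegular (algebraMap R S r) :=
  isLeftRegular_iff_isRegular.mp (hr.left.isSMulRegular.of_flat).isLeftRegular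

theorem IsLocalization.Away.algebraMap_injective_of_isRegular {R S : Type*} [CommSemiring R]
    [CommSemiring S] [Algebra R S] {r : R} [IsLocalization.Away r S] (hr : IsRegular r) :
    Function.Injective (algebraMap R S) :=
  (IsLocalization.injective_iff_isRegular (Submonoid.powers r)).mpr
    fun ⟨_, n, hn⟩ => hn ▸ hr.pow n

/-- Let `A` be an integral domain and `B` a flat `A`-algebra. If there is a
nonzero `a ∈ A` such that the localization `B_a` is an integral domain, then `B` is an
integral domain. -/
theorem isDomain_of_flat_of_isDomain_localization_away
    (A B : Type*) [CommRing A] [IsDomain A] [CommRing B] [Algebra A B]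
    [Module.Flat A B] (a : A) (ha : a ≠ 0)
    (h : IsDomain (Localization.Away (algebraMap A B a))) :
    IsDomain B :=
  have hreg : IsRegular (algebraMap A B a) := (IsRegular.of_ne_zero ha).algebraMap_of_flat
  (IsLocalization.Away.algebraMap_injective_of_isRegular
    (S := Localization.Away (algebraMap A B a)) hreg).isDomain _
end

section
/- Let σ ⊆ Ñ_ℚ = (N ⊕ ℤ) ⊗ ℚ be an admissible cone and d a positive integer divisible by the second coordinate of every primitive ray generator of σ not contained in N. Let S' be the submonoid of σ^∨ ∩ (M ⊕ (1/d)ℤ) generated by σ^∨ ∩ (M ⊕ ℤ) and (0, 1/d). Then the saturation of S' in M ⊕ (1/d)ℤ equals σ^∨ ∩ (M ⊕ (1/d)ℤ). -/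
open scoped BigOperators

variable (n : ℕ)

/-- The embedding of the lattice `Ñ = N ⊕ ℤ` (with `N = ℤⁿ`) into `Ñ_ℚ = N_ℚ ⊕ ℚ`. -/
def ιQ (p : (Fin n → ℤ) × ℤ) : (Fin n → ℚ) × ℚ :=
  (fun i => (p.1 i : ℚ), (p.2 : ℚ))

/-- The pairing between `M̃_ℚ = M_ℚ ⊕ ℚ` and `Ñ_ℚ = N_ℚ ⊕ ℚ`. -/
def pairQ (m v : (Fin n → ℚ) × ℚ) : ℚ :=
  (∑ i, m.1 i * v.1 i) + m.2 * v.2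

/-- The cone spanned (over `ℚ_{≥0}`) by a finite set of lattice points:
`σ` is a rational polyhedral cone iff it is of this form. -/
def coneSpan (G : Finset ((Fin n → ℤ) × ℤ)) : Set ((Fin n → ℚ) × ℚ) :=
  {x | ∃ c : G → ℚ, (∀ g, 0 ≤ c g) ∧ x = ∑ g : G, c g • ιQ n g}

/-- The dual cone `σ^∨ ⊆ M̃_ℚ` of a cone `σ ⊆ Ñ_ℚ`. -/
def dualCone (σ : Set ((Fin n → ℚ) × ℚ)) : Set ((Fin n → ℚ) × ℚ) :=
  {m | ∀ v ∈ σ, 0 ≤ pairQ n m v}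

/-- `F` is a face of the cone `σ`. -/
def IsFaceOf (F σ : Set ((Fin n → ℚ) × ℚ)) : Prop :=
  F ⊆ σ ∧ (∀ x ∈ F, ∀ c : ℚ, 0 ≤ c → c • x ∈ F) ∧
    (∀ x ∈ σ, ∀ y ∈ σ, x + y ∈ F → x ∈ F ∧ y ∈ F)

/-- A lattice vector is primitive if it is not a multiple `≥ 2` of a lattice vector. -/
def Primitive (v : (Fin n → ℤ) × ℤ) : Prop :=
  v ≠ 0 ∧ ¬∃ (w : (Fin n → ℤ) × ℤ) (c : ℕ), 2 ≤ c ∧ v = c • w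

/-- `v` is the primitive generator of a ray (one-dimensional face) of `σ`. -/
def IsRayGeneratorOf (σ : Set ((Fin n → ℚ) × ℚ)) (v : (Fin n → ℤ) × ℤ) : Prop :=
  Primitive n v ∧ ιQ n v ∈ σ ∧
    IsFaceOf n {x | ∃ c : ℚ, 0 ≤ c ∧ x = c • ιQ n v} σ


/-- The subgroup-as-subset `M ⊕ (1/d)ℤ` of `M_ℚ ⊕ ℚ` (for `d = 1` this is `M ⊕ ℤ`). -/
def latticeLevel (d : ℕ) : Set ((Fin n → ℚ) × ℚ) :=
  {x | (∀ i, ∃ z : ℤ, x.1 i = z) ∧ ∃ z : ℤ, x.2 = (z : ℚ) / d}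

/-- The `ℚ_{≥0}`-cone generated by a subset of `M_ℚ ⊕ ℚ`. -/
def coneOf (S : Set ((Fin n → ℚ) × ℚ)) : Set ((Fin n → ℚ) × ℚ) :=
  {x | ∃ (m : ℕ) (c : Fin m → ℚ) (g : Fin m → (Fin n → ℚ) × ℚ),
    (∀ i, 0 ≤ c i) ∧ (∀ i, g i ∈ S) ∧ x = ∑ i, c i • g i}

/-- The saturation of a submonoid `S` in a lattice `L`: the elements of `L` having a positive
multiple in `S`, intersected with the cone generated by `S`. -/
def saturationIn (L S : Set ((Fin n → ℚ) × ℚ)) : Set ((Fin n → ℚ) × ℚ) :=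
  {x | x ∈ L ∧ ∃ k : ℕ, 0 < k ∧ (k : ℚ) • x ∈ S} ∩ coneOf n S


lemma pairQ_smul (c : ℚ) (a v : (Fin n → ℚ) × ℚ) :
    pairQ n (c • a) v = c * pairQ n a v := by
  simp only [pairQ, Prod.smul_fst, Prod.smul_snd, Pi.smul_apply, smul_eq_mul,
    mul_add, Finset.mul_sum]
  ring_nf

lemma dualCone_addSubmonoid (σ : Set ((Fin n → ℚ) × ℚ)) :
    ∃ D : AddSubmonoid ((Fin n → ℚ) × ℚ), (D : Set _) = dualCone n σ := by
  refine ⟨{ carrier := dualCone n σ, add_mem' := ?_, zero_mem' := ?_ }, rfl⟩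
  · intro a b ha hb v hv
    have : pairQ n (a + b) v = pairQ n a v + pairQ n b v := by
      simp [pairQ, Finset.sum_add_distrib, add_mul]; ring
    rw [this]
    exact add_nonneg (ha v hv) (hb v hv)
  · intro v hv
    simp [pairQ]

/-- Let `σ ⊆ Ñ_ℚ` be an admissible rational polyhedral cone and `d > 0` an
integer divisible by the second coordinate of every primitive ray generator of `σ` not contained
in `N`.  Let `S'` be the submonoid of `σ^∨ ∩ (M ⊕ (1/d)ℤ)` generated by `σ^∨ ∩ (M ⊕ ℤ)` and
`(0, 1/d)`.  Then the saturation of `S'` in `M ⊕ (1/d)ℤ` equals `σ^∨ ∩ (M ⊕ (1/d)ℤ)`. -/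
theorem saturation_of_base_change_monoid
    (σ : Set ((Fin n → ℚ) × ℚ))
    (hpoly : ∃ G : Finset ((Fin n → ℤ) × ℤ), σ = coneSpan n G)
    (hadm : ∀ x ∈ σ, 0 ≤ x.2)
    (d : ℕ) (hd : 0 < d)
    (hray : ∀ v : (Fin n → ℤ) × ℤ, IsRayGeneratorOf n σ v → v.2 ≠ 0 → v.2 ∣ (d : ℤ)) :
    saturationIn n (latticeLevel n d)
        (AddSubmonoid.closure
          ((dualCone n σ ∩ latticeLevel n 1) ∪ {((0 : Fin n → ℚ), (1 : ℚ) / d)}) :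
            AddSubmonoid ((Fin n → ℚ) × ℚ))
      = dualCone n σ ∩ latticeLevel n d := by
  
  have hd' : (d : ℚ) ≠ 0 := Nat.cast_ne_zero.mpr hd.ne'
  -- the closure is contained in the dual cone
  obtain ⟨D, hD⟩ := dualCone_addSubmonoid n σ
  have hclos : (AddSubmonoid.closure
      ((dualCone n σ ∩ latticeLevel n 1) ∪ {((0 : Fin n → ℚ), (1 : ℚ) / d)}) :
        Set ((Fin n → ℚ) × ℚ)) ⊆ dualCone n σ := by
    rw [← hD]
    apply AddSubmonoid.closure_le.mpr
    rw [hD]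
    rintro x (⟨hx, -⟩ | hx)
    · exact hx
    · intro v hv
      simp only [Set.mem_singleton_iff] at hx
      subst hx
      simp only [pairQ, Pi.zero_apply, zero_mul, Finset.sum_const_zero, zero_add]
      exact mul_nonneg (by positivity) (hadm v hv)
  ext x
  constructor
  · rintro ⟨⟨hL, k, hk, hkx⟩, -⟩
    refine ⟨?_, hL⟩
    intro v hv
    have h1 : 0 ≤ pairQ n ((k : ℚ) • x) v := hclos hkx v hv
    rw [pairQ_smul] at h1
    have hk' : (0 : ℚ) < k := by exact_mod_cast hk
    nlinarith
  · rintro ⟨hdual, hlat⟩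
    have hdx : (d : ℚ) • x ∈
        ((dualCone n σ ∩ latticeLevel n 1) ∪ {((0 : Fin n → ℚ), (1 : ℚ) / d)}) := by
      left
      constructor
      · intro v hv
        rw [pairQ_smul]
        exact mul_nonneg (by positivity) (hdual v hv)
      · constructor
        · intro i
          obtain ⟨z, hz⟩ := hlat.1 i
          exact ⟨d * z, by simp [hz, mul_comm]⟩
        · obtain ⟨z, hz⟩ := hlat.2
          refine ⟨z, ?_⟩
          simp only [Prod.smul_snd, smul_eq_mul, hz, Nat.cast_one, div_one]
          field_simp
    have hdx' : (d : ℚ) • x ∈ (AddSubmonoid.closure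
        ((dualCone n σ ∩ latticeLevel n 1) ∪ {((0 : Fin n → ℚ), (1 : ℚ) / d)}) :
          Set ((Fin n → ℚ) × ℚ)) := AddSubmonoid.subset_closure hdx
    refine ⟨⟨hlat, d, hd, hdx'⟩, ?_⟩
    refine ⟨1, fun _ => (d : ℚ)⁻¹, fun _ => (d : ℚ) • x, fun i => by positivity,
      fun i => hdx', ?_⟩
    rw [Fin.sum_univ_one, smul_smul, inv_mul_cancel₀ hd', one_smul]
end
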